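/- In any finite simple graph G, the maximum critical independent sets coincide with the maximum crowns: an independent set is a critical independent set of maximum cardinality if and only if it is a crown of maximum cardinality. -/

import Mathlib

open Finset

variable {V : Type*}

namespace CrownPaper

variable [Fintype V] [DecidableEq V]

/-- The (open) neighborhood of a finite set of vertices. -/
def nbrs (G : SimpleGraph V) [DecidableRel G.Adj] (A : Finset V) : Finset V :=
  univ.filter (fun v => ∃ a ∈ A, G.Adj v a)

/-- The closed neighborhood `N[A] = A ∪ N(A)`. -/
def closedNbrs (G : SimpleGraph V) [DecidableRel G.Adj] (A : Finset V) : Finset V :=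
  A ∪ nbrs G A

/-- `S` is an independent set of `G`. -/
def IsIndep (G : SimpleGraph V) (S : Finset V) : Prop :=
  ∀ a ∈ S, ∀ b ∈ S, ¬ G.Adj a b

/-- The difference `d(S) = |S| - |N(S)|`. -/
def diff (G : SimpleGraph V) [DecidableRel G.Adj] (S : Finset V) : ℤ :=
  (S.card : ℤ) - ((nbrs G S).card : ℤ)

/-- `S` is a critical independent set. -/
def IsCritIndep (G : SimpleGraph V) [DecidableRel G.Adj] (S : Finset V) : Prop :=
  IsIndep G S ∧ ∀ I : Finset V, IsIndep G I → diff G I ≤ diff G S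

/-- `S` is a crown: an independent set with a matching from `N(S)` into `S`. -/
def IsCrown (G : SimpleGraph V) [DecidableRel G.Adj] (S : Finset V) : Prop :=
  IsIndep G S ∧ ∃ f : V → V, (∀ v ∈ nbrs G S, f v ∈ S ∧ G.Adj v (f v)) ∧
    Set.InjOn f (nbrs G S : Set V)

/-- `S` is a local maximum independent set: a maximum independent set of `G[N[S]]`. -/
def IsLocalMaxIndep (G : SimpleGraph V) [DecidableRel G.Adj] (S : Finset V) : Prop :=
  IsIndep G S ∧ ∀ I : Finset V, IsIndep G I → I ⊆ closedNbrs G S → I.card ≤ S.card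

/-- The independence number. -/
noncomputable def alpha (G : SimpleGraph V) : ℕ :=
  sSup {n | ∃ S : Finset V, IsIndep G S ∧ S.card = n}

/-- `M` is a matching of `G`, given as a finite set of (ordered) edges. -/
def IsMatching (G : SimpleGraph V) (M : Finset (V × V)) : Prop :=
  (∀ e ∈ M, G.Adj e.1 e.2) ∧
  ∀ e ∈ M, ∀ e' ∈ M, e ≠ e' →
    e.1 ≠ e'.1 ∧ e.1 ≠ e'.2 ∧ e.2 ≠ e'.1 ∧ e.2 ≠ e'.2

/-- The matching number. -/
noncomputable def mu (G : SimpleGraph V) : ℕ :=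
  sSup {n | ∃ M : Finset (V × V), IsMatching G M ∧ M.card = n}

/-- `G` has a perfect matching. -/
def HasPerfectMatching (G : SimpleGraph V) : Prop :=
  ∃ M : Finset (V × V), IsMatching G M ∧ ∀ v : V, ∃ e ∈ M, v = e.1 ∨ v = e.2

/-- `G` is a König–Egerváry graph: `α(G) + μ(G) = |V(G)|`. -/
def IsKonigEgervary (G : SimpleGraph V) : Prop :=
  alpha G + mu G = Fintype.card V

/-- `G` is bipartite. -/
def IsBipartite (G : SimpleGraph V) : Prop :=
  ∃ X : Set V, ∀ a b : V, G.Adj a b → (a ∈ X ↔ b ∉ X)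

end CrownPaper

/-!
A critical independent set `S` satisfies Hall's condition for `N(S)` inside `S`: removing from
`S` the neighbours of `W ⊆ N(S)` removes `W` from the neighbourhood, so `|W| ≤ |N(W) ∩ S|` by
criticality. Hence critical sets are crowns. Conversely, if `T` is a crown and `S` is critical,
then `T ∪ (S \ N[T])` is again critical: the matching of `N(T)` into `T` pays for every vertex
of `S ∩ N[T]` lost and every vertex of `N(T)` gained. So a maximum crown `T` absorbs
`S \ N[T]` for any critical `S`, hence is critical, and a maximum critical set is a crown that
absorbs every crown.
-/

namespace CrownPaper

variable {G : SimpleGraph V} {S T W : Finset V}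

lemma IsIndep.mono (hT : IsIndep G T) (h : S ⊆ T) : IsIndep G S :=
  fun a ha b hb => hT a (h ha) b (h hb)

variable [Fintype V] [DecidableRel G.Adj]

lemma mem_nbrs {v : V} : v ∈ nbrs G S ↔ ∃ a ∈ S, G.Adj v a := by
  simp [nbrs]

lemma nbrs_mono (h : S ⊆ T) : nbrs G S ⊆ nbrs G T := fun _ hv =>
  let ⟨a, ha, hadj⟩ := mem_nbrs.mp hv
  mem_nbrs.mpr ⟨a, h ha, hadj⟩

lemma IsIndep.notMem_nbrs (hS : IsIndep G S) {v : V} (hv : v ∈ S) : v ∉ nbrs G S := fun hn =>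
  let ⟨b, hb, hadj⟩ := mem_nbrs.mp hn
  hS v hv b hb hadj

lemma exists_isCritIndep (G : SimpleGraph V) [DecidableRel G.Adj] : ∃ S, IsCritIndep G S := by
  classical
  have hne : (univ.filter (IsIndep G)).Nonempty := ⟨∅, by simp [IsIndep]⟩
  obtain ⟨S, hS, hmax⟩ := exists_max_image _ (diff G) hne
  exact ⟨S, (mem_filter.mp hS).2, fun I hI => hmax I (by simp [hI])⟩

variable [DecidableEq V]

lemma IsCrown.card_le_card_nbrs_inter (hT : IsCrown G T) (hW : W ⊆ nbrs G T) :
    #W ≤ #(nbrs G W ∩ T) := by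
  obtain ⟨-, f, hf, hfinj⟩ := hT
  refine card_le_card_of_injOn f (fun w hw => ?_) (hfinj.mono (coe_subset.mpr hW))
  have ⟨hfw, hadj⟩ := hf w (hW hw)
  exact mem_inter.mpr ⟨mem_nbrs.mpr ⟨w, hw, hadj.symm⟩, hfw⟩

lemma isCrown_of_forall_card_le (hS : IsIndep G S)
    (hall : ∀ W ⊆ nbrs G S, #W ≤ #(nbrs G W ∩ S)) : IsCrown G S := by
  let t : nbrs G S → Finset V := fun v => nbrs G {v.1} ∩ S
  have ht : ∀ s : Finset (nbrs G S), #s ≤ #(s.biUnion t) := fun s => by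
    have hbiUnion : s.biUnion t = nbrs G (s.map (Function.Embedding.subtype _)) ∩ S := by
      ext x
      simp [t, mem_nbrs, ← exists_and_right, and_assoc]
    rw [hbiUnion, ← card_map (Function.Embedding.subtype _)]
    exact hall _ fun _ hv => by
      obtain ⟨v, -, rfl⟩ := mem_map.mp hv
      exact v.2
  obtain ⟨f, hfinj, hf⟩ := (all_card_le_biUnion_card_iff_exists_injective t).mp ht
  refine ⟨hS, fun v => if hv : v ∈ nbrs G S then f ⟨v, hv⟩ else v, fun v hv => ?_, ?_⟩
  · have hfv := hf ⟨v, hv⟩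
    simp only [t, mem_inter, mem_nbrs, mem_singleton, exists_eq_left] at hfv
    simpa [hv] using ⟨hfv.2, hfv.1.symm⟩
  · intro x hx y hy hxy
    simp only [mem_coe] at hx hy
    exact congrArg Subtype.val (hfinj (by simpa [hx, hy] using hxy))

lemma IsCritIndep.card_le_card_nbrs_inter (hS : IsCritIndep G S) (hW : W ⊆ nbrs G S) :
    #W ≤ #(nbrs G W ∩ S) := by
  set B := nbrs G W ∩ S
  have hB : B ⊆ S := inter_subset_right
  have hdisj : Disjoint W (nbrs G (S \ B)) := disjoint_left.mpr fun w hw hn => by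
    obtain ⟨a, ha, hadj⟩ := mem_nbrs.mp hn
    exact (mem_sdiff.mp ha).2 (mem_inter.mpr ⟨mem_nbrs.mpr ⟨w, hw, hadj.symm⟩, (mem_sdiff.mp ha).1⟩)
  have hN : #W + #(nbrs G (S \ B)) ≤ #(nbrs G S) := by
    rw [← card_union_of_disjoint hdisj]
    exact card_le_card (union_subset hW (nbrs_mono sdiff_subset))
  have hcrit := hS.2 (S \ B) (hS.1.mono sdiff_subset)
  have hSB := card_sdiff_of_subset hB
  have hBS := card_le_card hB
  simp only [diff] at hcrit
  omega

lemma IsCritIndep.isCrown (hS : IsCritIndep G S) : IsCrown G S :=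
  isCrown_of_forall_card_le hS.1 fun _ => hS.card_le_card_nbrs_inter

lemma IsIndep.union_sdiff_closedNbrs (hT : IsIndep G T) (hS : IsIndep G S) :
    IsIndep G (T ∪ (S \ closedNbrs G T)) := by
  have hout : ∀ a ∈ T, ∀ b ∈ S \ closedNbrs G T, ¬ G.Adj a b := fun a ha b hb hadj =>
    (mem_sdiff.mp hb).2 (mem_union_right _ (mem_nbrs.mpr ⟨a, ha, hadj.symm⟩))
  intro a ha b hb hadj
  rcases mem_union.mp ha with ha | ha <;> rcases mem_union.mp hb with hb | hb
  · exact hT a ha b hb hadj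
  · exact hout a ha b hb hadj
  · exact hout b hb a ha hadj.symm
  · exact hS a (mem_sdiff.mp ha).1 b (mem_sdiff.mp hb).1 hadj

lemma IsCrown.diff_le_diff_union_sdiff_closedNbrs (hT : IsCrown G T) (hS : IsIndep G S) :
    diff G S ≤ diff G (T ∪ (S \ closedNbrs G T)) := by
  set S' := T ∪ (S \ closedNbrs G T)
  have hS' : IsIndep G S' := hT.1.union_sdiff_closedNbrs hS
  have hcardS' : #S' = #T + #(S \ closedNbrs G T) := card_union_of_disjoint <|
    disjoint_left.mpr fun a ha hb => (mem_sdiff.mp hb).2 (mem_union_left _ ha)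
  have hlost : #(S ∩ closedNbrs G T) ≤ #(S ∩ T) + #(S ∩ nbrs G T) := by
    rw [closedNbrs, inter_union_distrib_left]
    exact card_union_le _ _
  have hnbrs : nbrs G S' ⊆ (nbrs G T \ nbrs G S) ∪ (nbrs G S \ T) := fun u hu => by
    have huT : u ∉ T := fun h => hS'.notMem_nbrs (mem_union_left _ h) hu
    obtain ⟨a, ha, hadj⟩ := mem_nbrs.mp hu
    rcases mem_union.mp ha with ha | ha
    · by_cases huS : u ∈ nbrs G S
      · exact mem_union_right _ (mem_sdiff.mpr ⟨huS, huT⟩)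
      · exact mem_union_left _ (mem_sdiff.mpr ⟨mem_nbrs.mpr ⟨a, ha, hadj⟩, huS⟩)
    · exact mem_union_right _
        (mem_sdiff.mpr ⟨mem_nbrs.mpr ⟨a, (mem_sdiff.mp ha).1, hadj⟩, huT⟩)
  -- The matching sends `N(T) \ N(S)` into `T \ S` and `S ∩ N(T)` into `N(S) ∩ T`.
  have hgained : #(nbrs G T \ nbrs G S) ≤ #(T \ S) := by
    refine (hT.card_le_card_nbrs_inter sdiff_subset).trans (card_le_card fun t ht => ?_)
    obtain ⟨htW, htT⟩ := mem_inter.mp ht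
    obtain ⟨w, hw, hadj⟩ := mem_nbrs.mp htW
    exact mem_sdiff.mpr ⟨htT, fun htS => (mem_sdiff.mp hw).2 (mem_nbrs.mpr ⟨t, htS, hadj.symm⟩)⟩
  have hpaid : #(S ∩ nbrs G T) ≤ #(nbrs G S ∩ T) :=
    (hT.card_le_card_nbrs_inter inter_subset_right).trans
      (card_le_card (inter_subset_inter_right (nbrs_mono inter_subset_left)))
  have := card_le_card hnbrs
  have := card_union_le (nbrs G T \ nbrs G S) (nbrs G S \ T)
  have := card_sdiff_add_card_inter S (closedNbrs G T)
  have := inter_comm T S ▸ card_sdiff_add_card_inter T S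
  have := card_sdiff_add_card_inter (nbrs G S) T
  simp only [diff]
  omega

lemma IsCrown.isCritIndep_union_sdiff_closedNbrs (hT : IsCrown G T) (hS : IsCritIndep G S) :
    IsCritIndep G (T ∪ (S \ closedNbrs G T)) :=
  ⟨hT.1.union_sdiff_closedNbrs hS.1,
    fun I hI => (hS.2 I hI).trans (hT.diff_le_diff_union_sdiff_closedNbrs hS.1)⟩

end CrownPaper

open CrownPaper

theorem max_crit_indep_eq_max_crown (G : SimpleGraph V) [Fintype V] [DecidableEq V]
    [DecidableRel G.Adj] (S : Finset V) :
    (IsCritIndep G S ∧ ∀ T : Finset V, IsCritIndep G T → T.card ≤ S.card) ↔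
    (IsCrown G S ∧ ∀ T : Finset V, IsCrown G T → T.card ≤ S.card) := by
  constructor
  · rintro ⟨hS, hmax⟩
    exact ⟨hS.isCrown, fun T hT => (card_le_card subset_union_left).trans
      (hmax _ (hT.isCritIndep_union_sdiff_closedNbrs hS))⟩
  · rintro ⟨hS, hmax⟩
    obtain ⟨S₀, hS₀⟩ := exists_isCritIndep G
    have hcrit := hS.isCritIndep_union_sdiff_closedNbrs hS₀
    have habsorb : S ∪ (S₀ \ closedNbrs G S) = S :=
      (eq_of_subset_of_card_le subset_union_left (hmax _ hcrit.isCrown)).symm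
    rw [habsorb] at hcrit
    exact ⟨hcrit, fun T hT => hmax T hT.isCrown⟩
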